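/- arXiv:1805.04156 — 6 statements merged into one kernel-verified Lean document; each statement's English description precedes it below -/
import Mathlib

section
/- For every candidate c ∈ C, the number m_c is the maximum plurality score that c can obtain over all completions of P; that is, (i) for every completion T of P we have score(T,c) ≤ m_c, and (ii) there exists a completion T of P with score(T,c) = m_c. -/
/-- `c` is a maximal element of the partial order (relation) `Q` (where `Q a b` means
`b` is weakly preferred to `a`): no candidate `d ≠ c` is strictly above `c`. -/
def MaxIn {C : Type*} (Q : C → C → Prop) (c : C) : Prop := ∀ d, Q c d → d = c

/-- `T` is a completion of the partial voting profile `P`: each `T i` is a linear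
order extending the partial order `P i`.  (`T i a b` means `b` is weakly preferred
to `a` by voter `i`.) -/
def IsCompletion {C : Type*} {n : ℕ} (P T : Fin n → C → C → Prop) : Prop :=
  (∀ i, IsLinearOrder C (T i)) ∧ ∀ i a b, P i a b → T i a b

/-- The plurality score of `c`: the number of voters whose greatest (most preferred)
element is `c`. -/
noncomputable def pluralityScore {C : Type*} {n : ℕ} (T : Fin n → C → C → Prop) (c : C) : ℕ :=
  Nat.card {i : Fin n // ∀ d, T i d c}

/-- `m_c`: the number of indices `i` such that `c` is maximal in `P i`. -/
noncomputable def maxCount {C : Type*} {n : ℕ} (P : Fin n → C → C → Prop) (c : C) : ℕ :=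
  Nat.card {i : Fin n // MaxIn (P i) c}

/-- `c` is a plurality winner of `T`. -/
def IsPluralityWinner {C : Type*} {n : ℕ} (T : Fin n → C → C → Prop) (c : C) : Prop :=
  ∀ d, pluralityScore T d ≤ pluralityScore T c

/-- `P i` is a necessary supporter of `A`: every maximal element of `P i` lies in `A`. -/
def NecessarySupporter {C : Type*} {n : ℕ} (P : Fin n → C → C → Prop) (A : Set C)
    (i : Fin n) : Prop := ∀ c, MaxIn (P i) c → c ∈ A

/-- For every candidate `c`, the number `m_c` is the maximum plurality score
that `c` can obtain over all completions of `P`. -/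
theorem maxCount_is_max_plurality_score {C : Type*} [Fintype C] [Nonempty C] {n : ℕ}
    (P : Fin n → C → C → Prop) (hP : ∀ i, IsPartialOrder C (P i)) (c : C) :
    (∀ T, IsCompletion P T → pluralityScore T c ≤ maxCount P c) ∧
    (∃ T, IsCompletion P T ∧ pluralityScore T c = maxCount P c) := by
  constructor
  · intro T hT
    have key : ∀ i : Fin n, (∀ d, T i d c) → MaxIn (P i) c := by
      intro i hi d hd
      haveI := hT.1 i
      exact (antisymm (hi d) (hT.2 i c d hd))
    exact Nat.card_le_card_of_injective
      (fun x : {i // ∀ d, T i d c} => (⟨x.1, key x.1 x.2⟩ : {i // MaxIn (P i) c}))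
      (fun a b h => Subtype.ext (by injection h))
  · set P' : Fin n → C → C → Prop := fun i a b => P i a b ∨ (MaxIn (P i) c ∧ b = c) with hP'
    have hpo : ∀ i, IsPartialOrder C (P' i) := by
      intro i
      haveI := hP i
      refine { refl := fun a => Or.inl (refl a), trans := ?_, antisymm := ?_ }
      · intro a b d hab hbd
        rcases hbd with hbd | ⟨hm, rfl⟩
        · rcases hab with hab | ⟨hm, rfl⟩
          · exact Or.inl (Trans.trans hab hbd)
          · exact Or.inr ⟨hm, hm _ hbd⟩
        · exact Or.inr ⟨hm, rfl⟩
      · intro a b hab hba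
        rcases hab with hab | ⟨hm, rfl⟩ <;> rcases hba with hba | ⟨hm', h'⟩
        · exact antisymm hab hba
        · subst h'; exact (hm' _ hab).symm
        · exact (hm _ hba)
        · exact h'
    have hext : ∀ i, ∃ s, IsLinearOrder C s ∧ ∀ a b, P' i a b → s a b := by
      intro i
      haveI := hpo i
      obtain ⟨s, hs, hle⟩ := extend_partialOrder (P' i)
      exact ⟨s, hs, fun a b h => hle a b h⟩
    choose T hT1 hT2 using hext
    have hcomp : IsCompletion P T := ⟨hT1, fun i a b h => hT2 i a b (Or.inl h)⟩
    refine ⟨T, hcomp, ?_⟩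
    have hiff : ∀ i : Fin n, (∀ d, T i d c) ↔ MaxIn (P i) c := by
      intro i
      constructor
      · intro hi d hd
        haveI := hT1 i
        exact antisymm (hi d) (hT2 i c d (Or.inl hd))
      · intro hm d
        exact hT2 i d c (Or.inr ⟨hm, rfl⟩)
    exact Nat.card_congr (Equiv.subtypeEquivRight hiff)
end

section
/- Let A ⊆ C with C \ A nonempty, and let c_q ∈ C \ A be a candidate such that m_{c_q} ≥ m_c for all c ∈ C \ A. Then for every completion U of P there exists a completion U′ of P such that score(U′, c_q) = m_{c_q} and score(U′, a) ≤ score(U, a) for every a ∈ A. -/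
/-- If `c_q ∉ A` maximizes `m_c` over `C \ A`, then every completion `U`
can be transformed into a completion `U'` in which `c_q` attains its maximal score `m_{c_q}`
while no member of `A` gains any score. -/
theorem promote_cq_completion {C : Type*} [Fintype C] [Nonempty C] {n : ℕ}
    (P : Fin n → C → C → Prop) (hP : ∀ i, IsPartialOrder C (P i))
    (A : Set C) (cq : C) (hcq : cq ∉ A)
    (hmax : ∀ c, c ∉ A → maxCount P c ≤ maxCount P cq) :
    ∀ U, IsCompletion P U →
      ∃ U', IsCompletion P U' ∧ pluralityScore U' cq = maxCount P cq ∧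
        ∀ a ∈ A, pluralityScore U' a ≤ pluralityScore U a := by
  intro U hU
  classical
  have hlin := hU.1
  have hext := hU.2
  have key : ∀ i, MaxIn (P i) cq → ∃ s : C → C → Prop,
      IsLinearOrder C s ∧ (∀ a b, P i a b → s a b) ∧ (∀ d, s d cq) := by
    intro i hi
    set R : C → C → Prop := fun a b => P i a b ∨ b = cq with hR
    haveI : IsPartialOrder C R :=
      { refl := fun a => Or.inl ((hP i).refl a)
        trans := by
          intro a b c hab hbc
          rcases hbc with hbc | rfl
          · rcases hab with hab | rfl
            · exact Or.inl ((hP i).trans _ _ _ hab hbc)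
            · exact Or.inr (hi _ hbc)
          · exact Or.inr rfl
        antisymm := by
          intro a b hab hba
          rcases hab with hab | rfl
          · rcases hba with hba | rfl
            · exact (hP i).antisymm _ _ hab hba
            · exact (hi _ hab).symm
          · rcases hba with hba | h
            · exact hi _ hba
            · exact h }
    obtain ⟨s, hs, hRs⟩ := extend_partialOrder R
    exact ⟨s, hs, fun a b h => hRs _ _ (Or.inl h), fun d => hRs _ _ (Or.inr rfl)⟩
  choose! s hs1 hs2 hs3 using key
  set U' : Fin n → C → C → Prop :=
    fun i => if MaxIn (P i) cq then s i else U i with hU'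
  have hU'eq : ∀ i, MaxIn (P i) cq → U' i = s i := by
    intro i h; simp [hU', h]
  have hU'ne : ∀ i, ¬ MaxIn (P i) cq → U' i = U i := by
    intro i h; simp [hU', h]
  refine ⟨U', ⟨?_, ?_⟩, ?_, ?_⟩
  · intro i
    by_cases h : MaxIn (P i) cq
    · rw [hU'eq i h]; exact hs1 i h
    · rw [hU'ne i h]; exact hlin i
  · intro i a b hpab
    by_cases h : MaxIn (P i) cq
    · rw [hU'eq i h]; exact hs2 i h a b hpab
    · rw [hU'ne i h]; exact hext i a b hpab
  · unfold pluralityScore maxCount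
    apply Nat.card_congr
    apply Equiv.subtypeEquivRight
    intro i
    constructor
    · intro htop
      by_contra hnm
      have htop' : ∀ d, U i d cq := by rw [← hU'ne i hnm]; exact htop
      apply hnm
      intro d hd
      haveI := hlin i
      exact _root_.antisymm (htop' d) (hext i cq d hd)
    · intro hm d
      rw [hU'eq i hm]
      exact hs3 i hm d
  · intro a ha
    have hmono : ∀ i, (∀ d, U' i d a) → (∀ d, U i d a) := by
      intro i h
      by_cases hm : MaxIn (P i) cq
      · exfalso
        have h1 : s i a cq := hs3 i hm a
        have h2 : s i cq a := by rw [← hU'eq i hm]; exact h cq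
        haveI := hs1 i hm
        have : a = cq := _root_.antisymm h1 h2
        exact hcq (this ▸ ha)
      · rw [← hU'ne i hm]; exact h
    exact Nat.card_le_card_of_injective
      (fun x : {i : Fin n // ∀ d, U' i d a} => (⟨x.1, hmono x.1 x.2⟩ : {i : Fin n // ∀ d, U i d a}))
      (fun x y hxy => Subtype.ext (by simpa using congrArg Subtype.val hxy))
end

section
/- Let n ≥ 1, let A ⊆ C with C \ A nonempty, and set m_q = max{ m_c : c ∈ C \ A }. Then the following are equivalent: (1) there is a completion T of P such that no member of A is a plurality winner of T; (2) there is a completion T of P such that score(T,a) < m_q for every a ∈ A. -/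
section Aux

variable {C : Type*} {n : ℕ}

private lemma card_subtype_le {p q : Fin n → Prop} (h : ∀ i, p i → q i) :
    Nat.card {i // p i} ≤ Nat.card {i // q i} :=
  Nat.card_le_card_of_injective (fun x => ⟨x.1, h x.1 x.2⟩)
    (fun x y hxy => Subtype.ext (congrArg Subtype.val hxy : _))

/-- score is at most maxCount in any completion. -/
private lemma score_le_maxCount {P T : Fin n → C → C → Prop}
    (hT : IsCompletion P T) (hP : ∀ i, IsPartialOrder C (P i)) (c : C) :
    pluralityScore T c ≤ maxCount P c := by
  apply card_subtype_le
  intro i hi d hd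
  exact ((hT.1 i).toIsPartialOrder).antisymm d c (hi d) (hT.2 i c d hd)

/-- a partial order with maximal element `c` has a linear extension with `c` on top. -/
private lemma exists_top_extension (Q : C → C → Prop) (hQ : IsPartialOrder C Q) (c : C)
    (hc : MaxIn Q c) :
    ∃ S : C → C → Prop, IsLinearOrder C S ∧ (∀ a b, Q a b → S a b) ∧ ∀ d, S d c := by
  let R : C → C → Prop := fun a b => Q a b ∨ b = c
  have hR : IsPartialOrder C R := by
    refine { refl := ?_, trans := ?_, antisymm := ?_ }
    · exact fun a => Or.inl (hQ.refl a)
    · rintro a b d (hab | rfl) (hbd | rfl)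
      · exact Or.inl (hQ.trans _ _ _ hab hbd)
      · exact Or.inr rfl
      · exact Or.inr (hc d hbd)
      · exact Or.inr rfl
    · rintro a b (hab | rfl) (hba | rfl)
      · exact hQ.antisymm _ _ hab hba
      · exact (hc b hab).symm
      · exact hc a hba
      · rfl
  obtain ⟨S, hS, hRS⟩ := @extend_partialOrder C R hR
  exact ⟨S, hS, fun a b hab => hRS a b (Or.inl hab), fun d => hRS d c (Or.inr rfl)⟩

end Aux

/-- with `m_q = max{ m_c : c ∈ C \ A }`, there is a completion with no winner
in `A` iff there is a completion in which every member of `A` scores below `m_q`. -/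
theorem no_winner_in_A_iff_all_below_mq {C : Type*} [Fintype C] [Nonempty C] {n : ℕ}
    (hn : 1 ≤ n)
    (P : Fin n → C → C → Prop) (hP : ∀ i, IsPartialOrder C (P i))
    (A : Set C) (mq : ℕ)
    (hmq_mem : ∃ c ∉ A, maxCount P c = mq)
    (hmq_ub : ∀ c ∉ A, maxCount P c ≤ mq) :
    (∃ T, IsCompletion P T ∧ ∀ a ∈ A, ¬ IsPluralityWinner T a) ↔
    (∃ T, IsCompletion P T ∧ ∀ a ∈ A, pluralityScore T a < mq) := by
  classical
  constructor
  · rintro ⟨T, hT, hA⟩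
    refine ⟨T, hT, fun a ha => ?_⟩
    obtain ⟨w, hw⟩ := Finite.exists_max (pluralityScore T)
    have hwA : w ∉ A := fun h => hA w h hw
    have h1 : pluralityScore T a < pluralityScore T w := by
      have hna := hA a ha
      rw [IsPluralityWinner, not_forall] at hna
      obtain ⟨d, hd⟩ := hna
      exact lt_of_lt_of_le (not_le.mp hd) (hw d)
    calc pluralityScore T a < pluralityScore T w := h1
      _ ≤ maxCount P w := score_le_maxCount hT hP w
      _ ≤ mq := hmq_ub w hwA
  · rintro ⟨T, hT, hA⟩
    obtain ⟨c, hcA, hcm⟩ := hmq_mem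
    let T' : Fin n → C → C → Prop := fun i =>
      if h : MaxIn (P i) c then Classical.choose (exists_top_extension (P i) (hP i) c h)
      else T i
    have hlin : ∀ i, IsLinearOrder C (T' i) := by
      intro i
      simp only [T']
      split
      · exact (Classical.choose_spec (exists_top_extension (P i) (hP i) c ‹_›)).1
      · exact hT.1 i
    have hext : ∀ i a b, P i a b → T' i a b := by
      intro i a b hab
      simp only [T']
      split
      · exact (Classical.choose_spec (exists_top_extension (P i) (hP i) c ‹_›)).2.1 a b hab
      · exact hT.2 i a b hab
    have htop : ∀ i, MaxIn (P i) c → ∀ d, T' i d c := by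
      intro i h d
      simp only [T', dif_pos h]
      exact (Classical.choose_spec (exists_top_extension (P i) (hP i) c h)).2.2 d
    have heq : ∀ i, ¬ MaxIn (P i) c → T' i = T i := by
      intro i h
      simp only [T', dif_neg h]
    have hcomp : IsCompletion P T' := ⟨hlin, hext⟩
    have hscore_c : mq ≤ pluralityScore T' c := by
      rw [← hcm]
      exact card_subtype_le (fun i hi => htop i hi)
    have hscore_a : ∀ a ∈ A, pluralityScore T' a ≤ pluralityScore T a := by
      intro a ha
      apply card_subtype_le
      intro i hi
      have hni : ¬ MaxIn (P i) c := by
        intro h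
        have h1 : T' i a c := htop i h a
        have h2 : T' i c a := hi c
        have : a = c := (hlin i).toIsPartialOrder.antisymm a c h1 h2
        exact hcA (this ▸ ha)
      rw [← heq i hni]
      exact hi
    refine ⟨T', hcomp, fun a ha hwin => ?_⟩
    have : pluralityScore T' c ≤ pluralityScore T' a := hwin c
    have : pluralityScore T' a < pluralityScore T' c :=
      lt_of_le_of_lt (hscore_a a ha) (lt_of_lt_of_le (hA a ha) hscore_c)
    omega
end

section
/- Let n ≥ 1, let A ⊆ C with C \ A nonempty, and set m_q = max{ m_c : c ∈ C \ A }. Then the following are equivalent: (1) there is a completion T of P such that score(T,a) < m_q for every a ∈ A; (2) there exists an injective function f from the set { i ∈ {1,…,n} : Pᵢ is a necessary supporter of A } into A × {1,…,m_q − 1} such that for every necessary supporter index i, the first component of f(i) belongs to max(Pᵢ). -/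
open Function

theorem exists_injective_prod_fin_iff_card_fiber_le {α β : Type*} [Finite α] (g : α → β)
    (k : ℕ) :
    (∃ h : α → Fin k, Injective fun x => (g x, h x)) ↔
      ∀ b, Nat.card {x // g x = b} ≤ k := by
  classical
  have := Fintype.ofFinite α
  constructor
  · rintro ⟨h, hinj⟩ b
    simpa using Nat.card_le_card_of_injective (fun x : {x // g x = b} => h x) fun x y hxy =>
      Subtype.ext (hinj (Prod.ext (x.2.trans y.2.symm) hxy))
  · intro hcard
    have e b : {x // g x = b} ↪ Fin k := (Embedding.nonempty_of_card_le <| by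
      rw [Fintype.card_fin, ← Nat.card_eq_fintype_card]; exact hcard b).some
    -- `α` is the disjoint union of the fibres of `g`; embed it fibrewise into `β × Fin k`.
    let E : α ↪ β × Fin k := (Equiv.sigmaFiberEquiv g).symm.toEmbedding.trans <|
      (Embedding.sigmaMap (Embedding.refl β) e).trans (Equiv.sigmaEquivProd β (Fin k)).toEmbedding
    exact ⟨fun x => (E x).2, E.injective⟩

section Relation

variable {C : Type*}

theorem IsLinearOrder.exists_greatest [Finite C] [Nonempty C] {r : C → C → Prop}
    (hr : IsLinearOrder C r) : ∃ c, ∀ d, r d c := by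
  let : LinearOrder C :=
    { le := r
      le_refl := refl_of r
      le_trans := fun _ _ _ => trans_of r
      le_antisymm := fun _ _ => antisymm_of r
      le_total := total_of r
      toDecidableLE := Classical.decRel r }
  exact Finite.exists_max id

theorem maxIn_of_forall_rel {P T : C → C → Prop} (hT : Std.Antisymm T)
    (hPT : ∀ a b, P a b → T a b) {c : C} (hc : ∀ d, T d c) : MaxIn P c :=
  fun d hd => antisymm_of T (hc d) (hPT c d hd)

theorem exists_linearExtension_greatest {P : C → C → Prop} (hP : IsPartialOrder C P) {c : C}
    (hc : MaxIn P c) :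
    ∃ s, IsLinearOrder C s ∧ (∀ a b, P a b → s a b) ∧ ∀ d, s d c := by
  let R a b := P a b ∨ b = c
  have : IsPartialOrder C R :=
    { refl := fun a => Or.inl (refl_of P a)
      trans := by
        rintro a b e (hab | rfl) (hbe | rfl)
        · exact Or.inl (trans_of P hab hbe)
        · exact Or.inr rfl
        · exact Or.inr (hc e hbe)
        · exact Or.inr rfl
      antisymm := by
        rintro a b (hab | rfl) (hba | rfl)
        · exact antisymm_of P hab hba
        · exact (hc b hab).symm
        · exact hc a hba
        · rfl }
  obtain ⟨s, hs, hRs⟩ := extend_partialOrder R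
  exact ⟨s, hs, fun a b h => hRs a b (Or.inl h), fun d => hRs d c (Or.inr rfl)⟩

end Relation

section Profile

variable {C : Type*} {n : ℕ}

theorem pluralityScore_eq_card_greatest_eq {T : Fin n → C → C → Prop}
    (hT : ∀ i, Std.Antisymm (T i)) {top : Fin n → C} (htop : ∀ i d, T i d (top i)) (c : C) :
    pluralityScore T c = Nat.card {i // top i = c} :=
  Nat.card_congr <| Equiv.subtypeEquivRight fun i =>
    ⟨fun h => antisymm_of (T i) (h (top i)) (htop i c), fun h => h ▸ htop i⟩

theorem necessarySupporter_of_maxCount_eq_zero {P : Fin n → C → C → Prop} {A : Set C}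
    (h : ∀ c ∉ A, maxCount P c = 0) (i : Fin n) : NecessarySupporter P A i := by
  intro c hc
  by_contra hcA
  exact Nat.card_ne_zero.mpr ⟨⟨⟨i, hc⟩⟩, inferInstance⟩ (h c hcA)

theorem exists_matching_of_completion [Finite C] [Nonempty C] {P T : Fin n → C → C → Prop}
    {A : Set C} {k : ℕ} (hT : IsCompletion P T) (hscore : ∀ a ∈ A, pluralityScore T a ≤ k) :
    ∃ f : {i : Fin n // NecessarySupporter P A i} → {a : C // a ∈ A} × Fin k,
      Injective f ∧ ∀ i, MaxIn (P i.1) ((f i).1 : C) := by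
  obtain ⟨hTlin, hTP⟩ := hT
  choose w hw using fun i => (hTlin i).exists_greatest
  have hwmax i : MaxIn (P i) (w i) := maxIn_of_forall_rel inferInstance (hTP i) (hw i)
  let g (i : {i // NecessarySupporter P A i}) : {a // a ∈ A} := ⟨w i, i.2 _ (hwmax i)⟩
  obtain ⟨h, hinj⟩ := (exists_injective_prod_fin_iff_card_fiber_le g k).2 fun a => calc
    Nat.card {i // g i = a} ≤ Nat.card {i // w i = a} :=
      Nat.card_le_card_of_injective (fun i => ⟨i.1.1, congrArg Subtype.val i.2⟩)
        fun _ _ h => Subtype.ext <| Subtype.ext <| Subtype.mk.inj h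
    _ = pluralityScore T a := (pluralityScore_eq_card_greatest_eq inferInstance hw a).symm
    _ ≤ k := hscore a a.2
  exact ⟨fun i => (g i, h i), hinj, fun i => hwmax i⟩

theorem exists_completion_of_matching {P : Fin n → C → C → Prop}
    (hP : ∀ i, IsPartialOrder C (P i)) {A : Set C} {k : ℕ}
    {f : {i : Fin n // NecessarySupporter P A i} → {a : C // a ∈ A} × Fin k}
    (hfinj : Injective f) (hfmax : ∀ i, MaxIn (P i.1) ((f i).1 : C)) :
    ∃ T, IsCompletion P T ∧ ∀ a ∈ A, pluralityScore T a ≤ k := by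
  -- A non-supporter has a maximal element outside `A`; put it on top so it scores nothing in `A`.
  have ht i : ∃ c, MaxIn (P i) c ∧ (∀ h, c = (f ⟨i, h⟩).1) ∧
      (c ∈ A → NecessarySupporter P A i) := by
    by_cases hi : NecessarySupporter P A i
    · exact ⟨_, hfmax ⟨i, hi⟩, fun _ => rfl, fun _ => hi⟩
    · obtain ⟨c, hc, hcA⟩ : ∃ c, MaxIn (P i) c ∧ c ∉ A := by
        simpa [NecessarySupporter] using hi
      exact ⟨c, hc, fun h => (hi h).elim, fun h => (hcA h).elim⟩
  choose t htmax htf htA using ht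
  choose T hTlin hTP htop using fun i => exists_linearExtension_greatest (hP i) (htmax i)
  refine ⟨T, ⟨hTlin, hTP⟩, fun a ha => ?_⟩
  calc pluralityScore T a = Nat.card {i // t i = a} :=
        pluralityScore_eq_card_greatest_eq inferInstance htop a
    _ ≤ Nat.card {i : {i // NecessarySupporter P A i} // (f i).1 = ⟨a, ha⟩} :=
        Nat.card_le_card_of_injective
          (fun i => ⟨⟨i, htA i (i.2.symm ▸ ha)⟩, Subtype.ext ((htf _ _).symm.trans i.2)⟩)
          fun _ _ h => Subtype.ext (congrArg (fun j => j.1.1) h)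
    _ ≤ k := (exists_injective_prod_fin_iff_card_fiber_le (fun i => (f i).1) k).1
        ⟨fun i => (f i).2, hfinj⟩ ⟨a, ha⟩

end Profile

theorem all_below_mq_iff_matching_general {C : Type*} [Fintype C] [Nonempty C] {n : ℕ}
    (hn : 1 ≤ n)
    (P : Fin n → C → C → Prop) (hP : ∀ i, IsPartialOrder C (P i))
    (A : Set C) (mq : ℕ)
    (hmq_ub : ∀ c ∉ A, maxCount P c ≤ mq) :
    (∃ T, IsCompletion P T ∧ ∀ a ∈ A, pluralityScore T a < mq) ↔
    (∃ f : {i : Fin n // NecessarySupporter P A i} → {a : C // a ∈ A} × Fin (mq - 1),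
      Function.Injective f ∧ ∀ i, MaxIn (P i.1) ((f i).1 : C)) := by
  constructor
  · rintro ⟨T, hT, hscore⟩
    exact exists_matching_of_completion hT fun a ha => Nat.le_sub_one_of_lt (hscore a ha)
  · rintro ⟨f, hfinj, hfmax⟩
    -- If `mq = 0`, every voter is a necessary supporter, yet `Fin (mq - 1) = Fin 0` is empty.
    have hmq : 1 ≤ mq := by
      by_contra! hmq
      have hsupp := necessarySupporter_of_maxCount_eq_zero (P := P) (A := A)
        (fun c hc => by have := hmq_ub c hc; omega) ⟨0, hn⟩
      have := (f ⟨_, hsupp⟩).2.isLt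
      omega
    obtain ⟨T, hT, hscore⟩ := exists_completion_of_matching hP hfinj hfmax
    exact ⟨T, hT, fun a ha => by have := hscore a ha; omega⟩

/-- with `m_q = max{ m_c : c ∈ C \ A }`, there is a completion in which every
member of `A` scores below `m_q` iff there is an injective function `f` from the necessary
supporters of `A` into `A × {1,…,m_q − 1}` such that the first component of `f i` is
maximal in `P i`. -/
theorem all_below_mq_iff_matching {C : Type*} [Fintype C] [Nonempty C] {n : ℕ}
    (hn : 1 ≤ n)
    (P : Fin n → C → C → Prop) (hP : ∀ i, IsPartialOrder C (P i))
    (A : Set C) (mq : ℕ)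
    (hmq_mem : ∃ c ∉ A, maxCount P c = mq)
    (hmq_ub : ∀ c ∉ A, maxCount P c ≤ mq) :
    (∃ T, IsCompletion P T ∧ ∀ a ∈ A, pluralityScore T a < mq) ↔
    (∃ f : {i : Fin n // NecessarySupporter P A i} → {a : C // a ∈ A} × Fin (mq - 1),
      Function.Injective f ∧ ∀ i, MaxIn (P i.1) ((f i).1 : C)) :=
  all_below_mq_iff_matching_general hn P hP A mq hmq_ub
end

section
/- In the tautology-reduction profile, for every completion T and every literal a, the score of a is s(T,a) = (ℓ−1)·ρ + σ_a + (ℓ−1)·(r(d)+r(d+1)) + Σ_{i=1}^{m−1} r(i), where σ_a = r(d) if T selects a and σ_a = r(d+1) otherwise, and ρ = (Σ_{i=1}^{m} r(i)) − r(d) − r(d+1). -/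
/-- The candidate set `C = {x₀} ∪ {x_i, ¬x_i : 1 ≤ i ≤ ℓ}`:
`none` is the special candidate `x₀`, and `some (i, true)` / `some (i, false)`
are the literals `x_i` / `¬x_i`.  Thus `|C| = m = 2ℓ+1`. -/
abbrev Cand (ℓ : ℕ) := Option (Fin ℓ × Bool)

/-- The 0-based index of candidate `c` in the fixed enumeration `oth i` of the
`m − 2` candidates other than `x_i, ¬x_i` (the list `c₁,…,c_{m−2}`). -/
noncomputable def othIdx {ℓ : ℕ} (oth : Fin ℓ → Fin (2 * ℓ - 1) → Cand ℓ)
    (i : Fin ℓ) (c : Cand ℓ) : ℕ :=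
  if h : ∃ q, oth i q = c then (h.choose : ℕ) else 0

/-- The (1-based) position of candidate `c` in the base linear order
`c^i = (c₁,…,c_{d−1}, x_i, ¬x_i, c_d,…,c_{m−2})`. -/
noncomputable def viBasePos {ℓ : ℕ} (oth : Fin ℓ → Fin (2 * ℓ - 1) → Cand ℓ)
    (d : ℕ) (i : Fin ℓ) (c : Cand ℓ) : ℕ :=
  if c = some (i, true) then d
  else if c = some (i, false) then d + 1
  else if othIdx oth i c + 1 < d then othIdx oth i c + 1 else othIdx oth i c + 3

/-- The (1-based) position of candidate `c` in the linear order of voter `v_i^j`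
(for `j ∈ {1,…,m−3}`): the candidates `c₁,…,c_{m−2}` are shifted cyclically `j`
positions to the left, `x_i` is at position `d` and `¬x_i` at `d+1` when `j` is odd,
and they are swapped when `j` is even. -/
noncomputable def vijPos {ℓ : ℕ} (oth : Fin ℓ → Fin (2 * ℓ - 1) → Cand ℓ)
    (d : ℕ) (i : Fin ℓ) (j : ℕ) (c : Cand ℓ) : ℕ :=
  if c = some (i, true) then (if j % 2 = 1 then d else d + 1)
  else if c = some (i, false) then (if j % 2 = 1 then d + 1 else d)
  else
    let p := (othIdx oth i c + (2 * ℓ - 1) - j) % (2 * ℓ - 1) + 1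
    if p < d then p else p + 2

/-- The (1-based) position of candidate `c` in the linear order of voter `u_j`
(for `j ∈ {1,…,m−1}`): the literals `(c″₁,…,c″_{m−1}) = (x₁,¬x₁,…,x_ℓ,¬x_ℓ)`
shifted cyclically `j` positions to the left, followed by `x₀` at position `m`. -/
def uPos (ℓ : ℕ) (j : ℕ) (c : Cand ℓ) : ℕ :=
  match c with
  | none => 2 * ℓ + 1
  | some (i, b) => ((2 * (i : ℕ) + (if b then 0 else 1)) + 2 * ℓ - j) % (2 * ℓ) + 1

/-- `pos` is (the position function of) a linear order on the `m = 2ℓ+1` candidates: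
it is injective with values in `{1,…,m}`. -/
def IsPosOrder (ℓ : ℕ) (pos : Cand ℓ → ℕ) : Prop :=
  Function.Injective pos ∧ ∀ c, 1 ≤ pos c ∧ pos c ≤ 2 * ℓ + 1

/-- `Tv` is a completion of the tautology-reduction profile: `Tv i` is a linear order
extending the partial order of voter `v_i`, i.e. the order `c^i` with (only) the
comparison between `x_i` and `¬x_i` deleted.  (The orders of the voters `v_i^j` and
`u_j` are already total, so a completion is determined by the `Tv i`.) -/
def IsProfileCompletion {ℓ : ℕ} (oth : Fin ℓ → Fin (2 * ℓ - 1) → Cand ℓ)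
    (d : ℕ) (Tv : Fin ℓ → Cand ℓ → ℕ) : Prop :=
  ∀ i, IsPosOrder ℓ (Tv i) ∧
    ∀ a b, viBasePos oth d i a < viBasePos oth d i b →
      ¬(a = some (i, true) ∧ b = some (i, false)) → Tv i a < Tv i b

/-- The score `s(T,c)` of candidate `c` in the completion given by `Tv`: the sum over all
`n = ℓ(m−2)+(m−1)` voters (the `v_i`, the `v_i^j` for `j ∈ {1,…,m−3}`, and the `u_j` for
`j ∈ {1,…,m−1}`) of `r` applied to the position of `c`. -/
noncomputable def score {ℓ : ℕ} (r : ℕ → ℕ) (oth : Fin ℓ → Fin (2 * ℓ - 1) → Cand ℓ)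
    (d : ℕ) (Tv : Fin ℓ → Cand ℓ → ℕ) (c : Cand ℓ) : ℕ :=
  (∑ i : Fin ℓ, r (Tv i c)) +
  (∑ i : Fin ℓ, ∑ j ∈ Finset.Icc 1 (2 * ℓ - 2), r (vijPos oth d i j c)) +
  (∑ j ∈ Finset.Icc 1 (2 * ℓ), r (uPos ℓ j c))

/-- The completion `Tv` selects the literal `x_i` (if `b = true`) resp. `¬x_i`
(if `b = false`): the completion of voter `v_i` places it above its negation. -/
def Selects {ℓ : ℕ} (Tv : Fin ℓ → Cand ℓ → ℕ) (i : Fin ℓ) (b : Bool) : Prop :=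
  if b then Tv i (some (i, true)) < Tv i (some (i, false))
  else Tv i (some (i, false)) < Tv i (some (i, true))

/-- `c` is a winner of the completion `Tv`: it has maximum score. -/
noncomputable def IsWinner {ℓ : ℕ} (r : ℕ → ℕ) (oth : Fin ℓ → Fin (2 * ℓ - 1) → Cand ℓ)
    (d : ℕ) (Tv : Fin ℓ → Cand ℓ → ℕ) (c : Cand ℓ) : Prop :=
  ∀ c', score r oth d Tv c' ≤ score r oth d Tv c

namespace ScoreLitAux

open Finset

lemma card_cand (ℓ : ℕ) : Fintype.card (Cand ℓ) = 2 * ℓ + 1 := by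
  simp [Cand]; ring

lemma image_univ_eq {ℓ : ℕ} (f : Cand ℓ → ℕ) (hf : Function.Injective f)
    (hb : ∀ c, 1 ≤ f c ∧ f c ≤ 2 * ℓ + 1) :
    Finset.univ.image f = Finset.Icc 1 (2 * ℓ + 1) := by
  apply Finset.eq_of_subset_of_card_le
  · intro x hx
    simp only [Finset.mem_image, Finset.mem_univ, true_and] at hx
    obtain ⟨c, rfl⟩ := hx
    simp only [Finset.mem_Icc]
    exact hb c
  · rw [Finset.card_image_of_injective _ hf, Finset.card_univ, card_cand]
    simp

lemma rank_eq {ℓ : ℕ} (f : Cand ℓ → ℕ) (hf : Function.Injective f)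
    (hb : ∀ c, 1 ≤ f c ∧ f c ≤ 2 * ℓ + 1) (c : Cand ℓ) :
    f c = (Finset.univ.filter (fun c' => f c' ≤ f c)).card := by
  have h1 : (Finset.univ.filter (fun c' => f c' ≤ f c)).image f
      = Finset.Icc 1 (f c) := by
    ext x
    simp only [Finset.mem_image, Finset.mem_filter, Finset.mem_univ, true_and,
      Finset.mem_Icc]
    constructor
    · rintro ⟨c', hc', rfl⟩
      exact ⟨(hb c').1, hc'⟩
    · rintro ⟨h1, h2⟩
      have hx : x ∈ Finset.univ.image f := by
        rw [image_univ_eq f hf hb]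
        simp only [Finset.mem_Icc]
        have := hb c
        omega
      simp only [Finset.mem_image, Finset.mem_univ, true_and] at hx
      obtain ⟨c', rfl⟩ := hx
      exact ⟨c', h2, rfl⟩
  have h2 := Finset.card_image_of_injective
    (Finset.univ.filter (fun c' => f c' ≤ f c)) hf
  rw [h1] at h2
  rw [← h2, Nat.card_Icc]
  omega

lemma eq_of_strictmono {ℓ : ℕ} (f g : Cand ℓ → ℕ)
    (hf : Function.Injective f) (hfb : ∀ c, 1 ≤ f c ∧ f c ≤ 2 * ℓ + 1)
    (hg : Function.Injective g) (hgb : ∀ c, 1 ≤ g c ∧ g c ≤ 2 * ℓ + 1)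
    (h : ∀ a b, f a < f b → g a < g b) : ∀ c, g c = f c := by
  intro c
  have key : ∀ c', (g c' ≤ g c ↔ f c' ≤ f c) := by
    intro c'
    constructor
    · intro h'
      by_contra hc
      push_neg at hc
      exact absurd (h _ _ hc) (by omega)
    · intro h'
      rcases eq_or_lt_of_le h' with he | hl
      · rw [hf he]
      · exact (h _ _ hl).le
  rw [rank_eq f hf hfb c, rank_eq g hg hgb c]
  congr 1
  ext c'
  simp [key c']

section Oth

variable {ℓ : ℕ} (oth : Fin ℓ → Fin (2 * ℓ - 1) → Cand ℓ)

lemma othIdx_lt (i : Fin ℓ) (c : Cand ℓ) (h : ∃ q, oth i q = c) :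
    othIdx oth i c < 2 * ℓ - 1 := by
  rw [othIdx, dif_pos h]
  exact (h.choose).isLt

lemma oth_othIdx (i : Fin ℓ) (c : Cand ℓ) (h : ∃ q, oth i q = c) :
    oth i ⟨othIdx oth i c, othIdx_lt oth i c h⟩ = c := by
  have h2 : (⟨othIdx oth i c, othIdx_lt oth i c h⟩ : Fin (2 * ℓ - 1)) = h.choose := by
    ext
    show othIdx oth i c = (h.choose : ℕ)
    rw [othIdx, dif_pos h]
  rw [h2]
  exact h.choose_spec

lemma oth_surj (hℓ : 1 ≤ ℓ)
    (hoth_inj : ∀ i, Function.Injective (oth i))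
    (hoth_ne : ∀ i q, oth i q ≠ some (i, true) ∧ oth i q ≠ some (i, false))
    (i : Fin ℓ) (c : Cand ℓ) (h1 : c ≠ some (i, true)) (h2 : c ≠ some (i, false)) :
    ∃ q, oth i q = c := by
  have himg : (Finset.univ.image (oth i))
      = (Finset.univ \ {some (i, true), some (i, false)} : Finset (Cand ℓ)) := by
    apply Finset.eq_of_subset_of_card_le
    · intro x hx
      simp only [Finset.mem_image, Finset.mem_univ, true_and] at hx
      obtain ⟨q, rfl⟩ := hx
      simp only [Finset.mem_sdiff, Finset.mem_univ, Finset.mem_insert,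
        Finset.mem_singleton, true_and]
      push_neg
      exact hoth_ne i q
    · rw [Finset.card_image_of_injective _ (hoth_inj i), Finset.card_univ,
        Finset.card_sdiff_of_subset (Finset.subset_univ _), Finset.card_univ, card_cand]
      have : ({some (i, true), some (i, false)} : Finset (Cand ℓ)).card = 2 := by
        rw [Finset.card_insert_of_notMem (by simp), Finset.card_singleton]
      rw [this]
      simp
  have hc : c ∈ Finset.univ.image (oth i) := by
    rw [himg]
    simp [h1, h2]
  simpa using hc

lemma othIdx_inj (hℓ : 1 ≤ ℓ) (i : Fin ℓ) (c₁ c₂ : Cand ℓ)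
    (h₁ : ∃ q, oth i q = c₁) (h₂ : ∃ q, oth i q = c₂)
    (h : othIdx oth i c₁ = othIdx oth i c₂) : c₁ = c₂ := by
  have e1 := oth_othIdx oth i c₁ h₁
  have e2 := oth_othIdx oth i c₂ h₂
  rw [← e1, ← e2]
  congr 1
  exact Fin.ext h

end Oth
section Base

variable {ℓ : ℕ} (oth : Fin ℓ → Fin (2 * ℓ - 1) → Cand ℓ) (d : ℕ)

/-- value of `viBasePos` on a non-pair candidate. -/
lemma viBasePos_nonpair (i : Fin ℓ) (c : Cand ℓ)
    (h1 : c ≠ some (i, true)) (h2 : c ≠ some (i, false)) :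
    viBasePos oth d i c =
      if othIdx oth i c + 1 < d then othIdx oth i c + 1 else othIdx oth i c + 3 := by
  rw [viBasePos, if_neg h1, if_neg h2]

lemma viBasePos_xT (i : Fin ℓ) : viBasePos oth d i (some (i, true)) = d := by
  rw [viBasePos, if_pos rfl]

lemma viBasePos_xF (i : Fin ℓ) : viBasePos oth d i (some (i, false)) = d + 1 := by
  rw [viBasePos, if_neg (by simp), if_pos rfl]

variable (hℓ : 1 ≤ ℓ) (hd1 : 1 ≤ d) (hd2 : d ≤ 2 * ℓ)
  (hoth_inj : ∀ i, Function.Injective (oth i))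
  (hoth_ne : ∀ i q, oth i q ≠ some (i, true) ∧ oth i q ≠ some (i, false))

include hℓ hd1 hd2 hoth_inj hoth_ne

omit hd1 hd2 in
lemma othIdx_lt' (i : Fin ℓ) (c : Cand ℓ)
    (h1 : c ≠ some (i, true)) (h2 : c ≠ some (i, false)) :
    othIdx oth i c < 2 * ℓ - 1 :=
  othIdx_lt oth i c (oth_surj oth hℓ hoth_inj hoth_ne i c h1 h2)

lemma viBasePos_nonpair_facts (i : Fin ℓ) (c : Cand ℓ)
    (h1 : c ≠ some (i, true)) (h2 : c ≠ some (i, false)) :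
    1 ≤ viBasePos oth d i c ∧ viBasePos oth d i c ≤ 2 * ℓ + 1 ∧
      viBasePos oth d i c ≠ d ∧ viBasePos oth d i c ≠ d + 1 := by
  have hk := othIdx_lt' oth hℓ hoth_inj hoth_ne i c h1 h2
  rw [viBasePos_nonpair oth d i c h1 h2]
  split_ifs <;> omega

lemma viBasePos_bounds (i : Fin ℓ) (c : Cand ℓ) :
    1 ≤ viBasePos oth d i c ∧ viBasePos oth d i c ≤ 2 * ℓ + 1 := by
  by_cases h1 : c = some (i, true)
  · rw [h1, viBasePos_xT]; omega
  by_cases h2 : c = some (i, false)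
  · rw [h2, viBasePos_xF]; omega
  have := viBasePos_nonpair_facts oth d hℓ hd1 hd2 hoth_inj hoth_ne i c h1 h2
  exact ⟨this.1, this.2.1⟩

lemma viBasePos_inj (i : Fin ℓ) : Function.Injective (viBasePos oth d i) := by
  intro a b hab
  by_cases ha1 : a = some (i, true) <;> by_cases ha2 : a = some (i, false) <;>
    by_cases hb1 : b = some (i, true) <;> by_cases hb2 : b = some (i, false)
  all_goals try (rw [ha1, hb1]; done)
  all_goals try (rw [ha2, hb2]; done)
  all_goals try (rw [ha1, ha2] at *; simp_all; done)
  all_goals try (rw [hb1, hb2] at *; simp_all; done)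
  -- remaining: mixed pair/nonpair and nonpair/nonpair
  all_goals try (
    first
    | (exfalso
       have fb := viBasePos_nonpair_facts oth d hℓ hd1 hd2 hoth_inj hoth_ne i b hb1 hb2
       first
       | (rw [ha1, viBasePos_xT] at hab; omega)
       | (rw [ha2, viBasePos_xF] at hab; omega))
    | (exfalso
       have fa := viBasePos_nonpair_facts oth d hℓ hd1 hd2 hoth_inj hoth_ne i a ha1 ha2
       first
       | (rw [hb1, viBasePos_xT] at hab; omega)
       | (rw [hb2, viBasePos_xF] at hab; omega))
    | (exfalso; rw [ha1, hb2, viBasePos_xT, viBasePos_xF] at hab; omega)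
    | (exfalso; rw [ha2, hb1, viBasePos_xF, viBasePos_xT] at hab; omega))
  -- nonpair / nonpair
  have hka := othIdx_lt' oth hℓ hoth_inj hoth_ne i a ha1 ha2
  have hkb := othIdx_lt' oth hℓ hoth_inj hoth_ne i b hb1 hb2
  rw [viBasePos_nonpair oth d i a ha1 ha2, viBasePos_nonpair oth d i b hb1 hb2] at hab
  have : othIdx oth i a = othIdx oth i b := by
    split_ifs at hab <;> omega
  exact othIdx_inj oth hℓ i a b
    (oth_surj oth hℓ hoth_inj hoth_ne i a ha1 ha2)
    (oth_surj oth hℓ hoth_inj hoth_ne i b hb1 hb2) this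

end Base
section Swap

variable {ℓ : ℕ} (oth : Fin ℓ → Fin (2 * ℓ - 1) → Cand ℓ) (d : ℕ)

/-- the base order with `x_i` and `¬x_i` swapped. -/
noncomputable def swapPos (i : Fin ℓ) (c : Cand ℓ) : ℕ :=
  if c = some (i, true) then d + 1
  else if c = some (i, false) then d
  else viBasePos oth d i c

lemma swapPos_xT (i : Fin ℓ) : swapPos oth d i (some (i, true)) = d + 1 := by
  rw [swapPos, if_pos rfl]

lemma swapPos_xF (i : Fin ℓ) : swapPos oth d i (some (i, false)) = d := by
  rw [swapPos, if_neg (by simp), if_pos rfl]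

lemma swapPos_nonpair (i : Fin ℓ) (c : Cand ℓ)
    (h1 : c ≠ some (i, true)) (h2 : c ≠ some (i, false)) :
    swapPos oth d i c = viBasePos oth d i c := by
  rw [swapPos, if_neg h1, if_neg h2]

variable (hℓ : 1 ≤ ℓ) (hd1 : 1 ≤ d) (hd2 : d ≤ 2 * ℓ)
  (hoth_inj : ∀ i, Function.Injective (oth i))
  (hoth_ne : ∀ i q, oth i q ≠ some (i, true) ∧ oth i q ≠ some (i, false))

include hℓ hd1 hd2 hoth_inj hoth_ne

lemma swapPos_bounds (i : Fin ℓ) (c : Cand ℓ) :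
    1 ≤ swapPos oth d i c ∧ swapPos oth d i c ≤ 2 * ℓ + 1 := by
  by_cases h1 : c = some (i, true)
  · rw [h1, swapPos_xT]; omega
  by_cases h2 : c = some (i, false)
  · rw [h2, swapPos_xF]; omega
  rw [swapPos_nonpair oth d i c h1 h2]
  exact viBasePos_bounds oth d hℓ hd1 hd2 hoth_inj hoth_ne i c

lemma swapPos_inj (i : Fin ℓ) : Function.Injective (swapPos oth d i) := by
  intro a b hab
  by_cases ha1 : a = some (i, true) <;> by_cases ha2 : a = some (i, false) <;>
    by_cases hb1 : b = some (i, true) <;> by_cases hb2 : b = some (i, false)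
  all_goals try (rw [ha1, hb1])
  all_goals try (rw [ha2, hb2])
  all_goals try (
    first
    | (exfalso
       have fb := viBasePos_nonpair_facts oth d hℓ hd1 hd2 hoth_inj hoth_ne i b hb1 hb2
       rw [← swapPos_nonpair oth d i b hb1 hb2] at fb
       first
       | (rw [ha1, swapPos_xT] at hab; omega)
       | (rw [ha2, swapPos_xF] at hab; omega))
    | (exfalso
       have fa := viBasePos_nonpair_facts oth d hℓ hd1 hd2 hoth_inj hoth_ne i a ha1 ha2
       rw [← swapPos_nonpair oth d i a ha1 ha2] at fa
       first
       | (rw [hb1, swapPos_xT] at hab; omega)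
       | (rw [hb2, swapPos_xF] at hab; omega))
    | (exfalso; rw [ha1, hb2, swapPos_xT, swapPos_xF] at hab; omega)
    | (exfalso; rw [ha2, hb1, swapPos_xF, swapPos_xT] at hab; omega))
  all_goals try (rw [ha1, ha2] at *; simp_all)
  all_goals try (rw [hb1, hb2] at *; simp_all)
  rw [swapPos_nonpair oth d i a ha1 ha2, swapPos_nonpair oth d i b hb1 hb2] at hab
  exact viBasePos_inj oth d hℓ hd1 hd2 hoth_inj hoth_ne i hab

end Swap
section Det

variable {ℓ : ℕ} (oth : Fin ℓ → Fin (2 * ℓ - 1) → Cand ℓ) (d : ℕ)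
  (Tv : Fin ℓ → Cand ℓ → ℕ)
  (hℓ : 1 ≤ ℓ) (hd1 : 1 ≤ d) (hd2 : d ≤ 2 * ℓ)
  (hoth_inj : ∀ i, Function.Injective (oth i))
  (hoth_ne : ∀ i q, oth i q ≠ some (i, true) ∧ oth i q ≠ some (i, false))
  (hTv : IsProfileCompletion oth d Tv)

include hℓ hd1 hd2 hoth_inj hoth_ne hTv

lemma comp_viBase (i : Fin ℓ)
    (hsel : Tv i (some (i, true)) < Tv i (some (i, false))) :
    ∀ c, Tv i c = viBasePos oth d i c := by
  apply eq_of_strictmono (viBasePos oth d i) (Tv i)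
    (viBasePos_inj oth d hℓ hd1 hd2 hoth_inj hoth_ne i)
    (viBasePos_bounds oth d hℓ hd1 hd2 hoth_inj hoth_ne i)
    (hTv i).1.1 (hTv i).1.2
  intro a b hab
  by_cases h : a = some (i, true) ∧ b = some (i, false)
  · rw [h.1, h.2]; exact hsel
  · exact (hTv i).2 a b hab h

lemma comp_swap (i : Fin ℓ)
    (hsel : Tv i (some (i, false)) < Tv i (some (i, true))) :
    ∀ c, Tv i c = swapPos oth d i c := by
  apply eq_of_strictmono (swapPos oth d i) (Tv i)
    (swapPos_inj oth d hℓ hd1 hd2 hoth_inj hoth_ne i)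
    (swapPos_bounds oth d hℓ hd1 hd2 hoth_inj hoth_ne i)
    (hTv i).1.1 (hTv i).1.2
  intro a b hab
  by_cases ha1 : a = some (i, true) <;> by_cases ha2 : a = some (i, false) <;>
    by_cases hb1 : b = some (i, true) <;> by_cases hb2 : b = some (i, false)
  all_goals try (exfalso; rw [ha1] at ha2; simp at ha2; done)
  all_goals try (exfalso; rw [hb1] at hb2; simp at hb2; done)
  -- 1. a = xT, b = xT
  · exfalso; rw [ha1, hb1] at hab; omega
  -- 2. a = xT, b = xF
  · exfalso; rw [ha1, hb2, swapPos_xT, swapPos_xF] at hab; omega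
  -- 3. a = xT, b nonpair
  · have fb := viBasePos_nonpair_facts oth d hℓ hd1 hd2 hoth_inj hoth_ne i b hb1 hb2
    rw [ha1, swapPos_xT, swapPos_nonpair oth d i b hb1 hb2] at hab
    rw [ha1]
    apply (hTv i).2 _ _ _ (by simp [hb2])
    rw [viBasePos_xT]
    omega
  -- 4. a = xF, b = xT
  · rw [ha2, hb1]; exact hsel
  -- 5. a = xF, b = xF
  · exfalso; rw [ha2, hb2] at hab; omega
  -- 6. a = xF, b nonpair
  · have fb := viBasePos_nonpair_facts oth d hℓ hd1 hd2 hoth_inj hoth_ne i b hb1 hb2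
    rw [ha2, swapPos_xF, swapPos_nonpair oth d i b hb1 hb2] at hab
    rw [ha2]
    apply (hTv i).2 _ _ _ (by simp)
    rw [viBasePos_xF]
    omega
  -- 7. a nonpair, b = xT
  · have fa := viBasePos_nonpair_facts oth d hℓ hd1 hd2 hoth_inj hoth_ne i a ha1 ha2
    rw [hb1, swapPos_xT, swapPos_nonpair oth d i a ha1 ha2] at hab
    rw [hb1]
    apply (hTv i).2 _ _ _ (by simp [ha1])
    rw [viBasePos_xT]
    omega
  -- 8. a nonpair, b = xF
  · have fa := viBasePos_nonpair_facts oth d hℓ hd1 hd2 hoth_inj hoth_ne i a ha1 ha2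
    rw [hb2, swapPos_xF, swapPos_nonpair oth d i a ha1 ha2] at hab
    rw [hb2]
    apply (hTv i).2 _ _ _ (by simp [ha1])
    rw [viBasePos_xF]
    omega
  -- 9. both nonpair
  · rw [swapPos_nonpair oth d i a ha1 ha2, swapPos_nonpair oth d i b hb1 hb2] at hab
    exact (hTv i).2 a b hab (by simp [ha1])

lemma Tv_nonpair (i : Fin ℓ) (c : Cand ℓ)
    (h1 : c ≠ some (i, true)) (h2 : c ≠ some (i, false)) :
    Tv i c = viBasePos oth d i c := by
  rcases lt_trichotomy (Tv i (some (i, true))) (Tv i (some (i, false))) with h | h | h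
  · exact comp_viBase oth d Tv hℓ hd1 hd2 hoth_inj hoth_ne hTv i h c
  · exact absurd ((hTv i).1.1 h) (by simp)
  · rw [comp_swap oth d Tv hℓ hd1 hd2 hoth_inj hoth_ne hTv i h c,
      swapPos_nonpair oth d i c h1 h2]

lemma Tv_pair_sel (i : Fin ℓ) (b : Bool) (hsel : Selects Tv i b) :
    Tv i (some (i, b)) = d := by
  cases b
  · rw [Selects] at hsel
    simp only [Bool.false_eq_true, if_false] at hsel
    rw [comp_swap oth d Tv hℓ hd1 hd2 hoth_inj hoth_ne hTv i hsel, swapPos_xF]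
  · rw [Selects] at hsel
    simp only [if_true] at hsel
    rw [comp_viBase oth d Tv hℓ hd1 hd2 hoth_inj hoth_ne hTv i hsel, viBasePos_xT]

lemma Tv_pair_nosel (i : Fin ℓ) (b : Bool) (hsel : ¬ Selects Tv i b) :
    Tv i (some (i, b)) = d + 1 := by
  cases b
  · rw [Selects] at hsel
    simp only [Bool.false_eq_true, if_false, not_lt] at hsel
    have hne : Tv i (some (i, true)) ≠ Tv i (some (i, false)) := by
      intro h; exact absurd ((hTv i).1.1 h) (by simp)
    have h : Tv i (some (i, true)) < Tv i (some (i, false)) := by omega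
    rw [comp_viBase oth d Tv hℓ hd1 hd2 hoth_inj hoth_ne hTv i h, viBasePos_xF]
  · rw [Selects] at hsel
    simp only [if_true, not_lt] at hsel
    have hne : Tv i (some (i, true)) ≠ Tv i (some (i, false)) := by
      intro h; exact absurd ((hTv i).1.1 h) (by simp)
    have h : Tv i (some (i, false)) < Tv i (some (i, true)) := by omega
    rw [comp_swap oth d Tv hℓ hd1 hd2 hoth_inj hoth_ne hTv i h, swapPos_xT]

end Det
section Sums

lemma sum_cyc (N k : ℕ) (hN : 0 < N) (f : ℕ → ℕ) :
    ∑ j ∈ Finset.Icc 1 N, f ((k + N - j) % N + 1) = ∑ s ∈ Finset.Icc 1 N, f s := by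
  have hinj : ∀ a ∈ Finset.Icc 1 N, ∀ b ∈ Finset.Icc 1 N,
      (k + N - a) % N + 1 = (k + N - b) % N + 1 → a = b := by
    intro a ha b hb hab
    simp only [Finset.mem_Icc] at ha hb
    have h1 : (k + N - a) % N = (k + N - b) % N := by omega
    rcases le_total a b with h | h
    · have hd : N ∣ (k + N - a) - (k + N - b) :=
        (Nat.modEq_iff_dvd' (by omega)).mp h1.symm
      obtain ⟨t, ht⟩ := hd
      rcases Nat.eq_zero_or_pos t with rfl | hpos
      · omega
      · have : N ≤ N * t := Nat.le_mul_of_pos_right N hpos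
        omega
    · have hd : N ∣ (k + N - b) - (k + N - a) :=
        (Nat.modEq_iff_dvd' (by omega)).mp h1
      obtain ⟨t, ht⟩ := hd
      rcases Nat.eq_zero_or_pos t with rfl | hpos
      · omega
      · have : N ≤ N * t := Nat.le_mul_of_pos_right N hpos
        omega
  have himg : (Finset.Icc 1 N).image (fun j => (k + N - j) % N + 1)
      = Finset.Icc 1 N := by
    apply Finset.eq_of_subset_of_card_le
    · intro x hx
      simp only [Finset.mem_image, Finset.mem_Icc] at hx ⊢
      obtain ⟨j, hj, rfl⟩ := hx
      have := Nat.mod_lt (k + N - j) hN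
      omega
    · rw [Finset.card_image_of_injOn fun a ha b hb hab => hinj a ha b hb hab]
  conv_rhs => rw [← himg]
  rw [Finset.sum_image hinj]

lemma sum_phi {ℓ : ℕ} (hℓ : 1 ≤ ℓ) (d : ℕ) (hd1 : 1 ≤ d) (hd2 : d ≤ 2 * ℓ) (r : ℕ → ℕ) :
    (∑ p ∈ Finset.Icc 1 (2 * ℓ - 1), r (if p < d then p else p + 2)) + (r d + r (d + 1))
      = ∑ s ∈ Finset.Icc 1 (2 * ℓ + 1), r s := by
  have hinj : ∀ a ∈ Finset.Icc 1 (2 * ℓ - 1), ∀ b ∈ Finset.Icc 1 (2 * ℓ - 1),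
      (if a < d then a else a + 2) = (if b < d then b else b + 2) → a = b := by
    intro a ha b hb hab
    split_ifs at hab <;> omega
  have himg : (Finset.Icc 1 (2 * ℓ - 1)).image (fun p => if p < d then p else p + 2)
      = (Finset.Icc 1 (2 * ℓ + 1)) \ {d, d + 1} := by
    ext s
    simp only [Finset.mem_image, Finset.mem_Icc, Finset.mem_sdiff, Finset.mem_insert,
      Finset.mem_singleton]
    constructor
    · rintro ⟨p, hp, rfl⟩
      split_ifs <;> (push_neg; omega)
    · rintro ⟨⟨hs1, hs2⟩, hs3⟩
      push_neg at hs3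
      by_cases h : s < d
      · exact ⟨s, by omega, by rw [if_pos h]⟩
      · refine ⟨s - 2, by omega, ?_⟩
        rw [if_neg (by omega)]
        omega
  have hsub : ({d, d + 1} : Finset ℕ) ⊆ Finset.Icc 1 (2 * ℓ + 1) := by
    intro x hx
    simp only [Finset.mem_insert, Finset.mem_singleton] at hx
    simp only [Finset.mem_Icc]
    omega
  have hsdiff := Finset.sum_sdiff (f := r) hsub
  have hpair : ∑ s ∈ ({d, d + 1} : Finset ℕ), r s = r d + r (d + 1) :=
    Finset.sum_pair (by omega)
  calc (∑ p ∈ Finset.Icc 1 (2 * ℓ - 1), r (if p < d then p else p + 2)) + (r d + r (d + 1))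
      = (∑ s ∈ (Finset.Icc 1 (2 * ℓ + 1)) \ {d, d + 1}, r s) + (r d + r (d + 1)) := by
        rw [← himg, Finset.sum_image hinj]
    _ = ∑ s ∈ Finset.Icc 1 (2 * ℓ + 1), r s := by rw [← hpair, hsdiff]

lemma card_odd (ℓ : ℕ) :
    ((Finset.Icc 1 (2 * ℓ - 2)).filter (fun j => j % 2 = 1)).card = ℓ - 1 := by
  have : (Finset.Icc 1 (2 * ℓ - 2)).filter (fun j => j % 2 = 1)
      = (Finset.range (ℓ - 1)).image (fun t => 2 * t + 1) := by
    ext j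
    simp only [Finset.mem_filter, Finset.mem_Icc, Finset.mem_image, Finset.mem_range]
    constructor
    · rintro ⟨⟨h1, h2⟩, h3⟩
      exact ⟨j / 2, by omega, by omega⟩
    · rintro ⟨t, ht, rfl⟩
      omega
  rw [this, Finset.card_image_of_injective _ (fun a b h => by omega), Finset.card_range]

lemma card_even (ℓ : ℕ) :
    ((Finset.Icc 1 (2 * ℓ - 2)).filter (fun j => ¬ j % 2 = 1)).card = ℓ - 1 := by
  have : (Finset.Icc 1 (2 * ℓ - 2)).filter (fun j => ¬ j % 2 = 1)
      = (Finset.range (ℓ - 1)).image (fun t => 2 * t + 2) := by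
    ext j
    simp only [Finset.mem_filter, Finset.mem_Icc, Finset.mem_image, Finset.mem_range]
    constructor
    · rintro ⟨⟨h1, h2⟩, h3⟩
      exact ⟨j / 2 - 1, by omega, by omega⟩
    · rintro ⟨t, ht, rfl⟩
      omega
  rw [this, Finset.card_image_of_injective _ (fun a b h => by omega), Finset.card_range]

end Sums
section VijSums

variable {ℓ : ℕ} (r : ℕ → ℕ) (oth : Fin ℓ → Fin (2 * ℓ - 1) → Cand ℓ) (d : ℕ)

lemma vijPos_pair (i : Fin ℓ) (j : ℕ) (b : Bool) :
    vijPos oth d i j (some (i, b)) =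
      if j % 2 = 1 then (if b then d else d + 1) else (if b then d + 1 else d) := by
  cases b
  · rw [vijPos, if_neg (by simp), if_pos rfl]
    simp
  · rw [vijPos, if_pos rfl]
    simp

lemma sum_vij_pair (hℓ : 1 ≤ ℓ) (hd1 : 1 ≤ d) (i : Fin ℓ) (b : Bool) :
    ∑ j ∈ Finset.Icc 1 (2 * ℓ - 2), r (vijPos oth d i j (some (i, b)))
      = (ℓ - 1) * (r d + r (d + 1)) := by
  rw [Finset.sum_congr rfl (fun j _ => by rw [vijPos_pair oth d i j b])]
  rw [← Finset.sum_filter_add_sum_filter_not (Finset.Icc 1 (2 * ℓ - 2))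
    (fun j => j % 2 = 1)]
  have h1 : ∑ j ∈ (Finset.Icc 1 (2 * ℓ - 2)).filter (fun j => j % 2 = 1),
      r (if j % 2 = 1 then (if b then d else d + 1) else (if b then d + 1 else d))
      = (ℓ - 1) * r (if b then d else d + 1) := by
    rw [Finset.sum_congr rfl (fun j hj => by
      rw [if_pos (Finset.mem_filter.mp hj).2])]
    rw [Finset.sum_const, card_odd, smul_eq_mul]
  have h2 : ∑ j ∈ (Finset.Icc 1 (2 * ℓ - 2)).filter (fun j => ¬ j % 2 = 1),
      r (if j % 2 = 1 then (if b then d else d + 1) else (if b then d + 1 else d))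
      = (ℓ - 1) * r (if b then d + 1 else d) := by
    rw [Finset.sum_congr rfl (fun j hj => by
      rw [if_neg (Finset.mem_filter.mp hj).2])]
    rw [Finset.sum_const, card_even, smul_eq_mul]
  rw [h1, h2]
  cases b <;> simp only [Bool.false_eq_true, if_true, if_false] <;> ring

lemma sum_vi_all (hℓ : 1 ≤ ℓ) (hd1 : 1 ≤ d) (hd2 : d ≤ 2 * ℓ)
    (hoth_inj : ∀ i, Function.Injective (oth i))
    (hoth_ne : ∀ i q, oth i q ≠ some (i, true) ∧ oth i q ≠ some (i, false))
    (i : Fin ℓ) (c : Cand ℓ)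
    (h1 : c ≠ some (i, true)) (h2 : c ≠ some (i, false)) :
    r (viBasePos oth d i c) + ∑ j ∈ Finset.Icc 1 (2 * ℓ - 2), r (vijPos oth d i j c)
      = (∑ s ∈ Finset.Icc 1 (2 * ℓ + 1), r s) - r d - r (d + 1) := by
  have hk := othIdx_lt' oth hℓ hoth_inj hoth_ne i c h1 h2
  have hvij : ∀ j, vijPos oth d i j c =
      (fun p => if p < d then p else p + 2)
        ((othIdx oth i c + (2 * ℓ - 1) - j) % (2 * ℓ - 1) + 1) := by
    intro j
    rw [vijPos, if_neg h1, if_neg h2]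
  have hbase : viBasePos oth d i c = vijPos oth d i (2 * ℓ - 1) c := by
    rw [viBasePos_nonpair oth d i c h1 h2, hvij (2 * ℓ - 1)]
    have : (othIdx oth i c + (2 * ℓ - 1) - (2 * ℓ - 1)) % (2 * ℓ - 1)
        = othIdx oth i c := by
      rw [Nat.add_sub_cancel]
      exact Nat.mod_eq_of_lt hk
    rw [this]
    all_goals split_ifs <;> omega
  have hins : Finset.Icc 1 (2 * ℓ - 1) = insert (2 * ℓ - 1) (Finset.Icc 1 (2 * ℓ - 2)) := by
    ext x
    simp only [Finset.mem_Icc, Finset.mem_insert]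
    omega
  have hstep : r (viBasePos oth d i c) + ∑ j ∈ Finset.Icc 1 (2 * ℓ - 2), r (vijPos oth d i j c)
      = ∑ j ∈ Finset.Icc 1 (2 * ℓ - 1), r (vijPos oth d i j c) := by
    rw [hins, Finset.sum_insert (by simp only [Finset.mem_Icc]; omega), hbase]
  rw [hstep, Finset.sum_congr rfl (fun j _ => by rw [hvij j]),
    sum_cyc (2 * ℓ - 1) (othIdx oth i c) (by omega)
      (fun p => r (if p < d then p else p + 2))]
  have := sum_phi hℓ d hd1 hd2 r
  omega

lemma sum_u (hℓ : 1 ≤ ℓ) (i : Fin ℓ) (b : Bool) :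
    ∑ j ∈ Finset.Icc 1 (2 * ℓ), r (uPos ℓ j (some (i, b)))
      = ∑ s ∈ Finset.Icc 1 (2 * ℓ), r s := by
  have : ∀ j, uPos ℓ j (some (i, b))
      = ((2 * (i : ℕ) + (if b then 0 else 1)) + 2 * ℓ - j) % (2 * ℓ) + 1 := fun j => rfl
  rw [Finset.sum_congr rfl (fun j _ => by rw [this j])]
  exact sum_cyc (2 * ℓ) (2 * (i : ℕ) + (if b then 0 else 1)) (by omega) r

end VijSums
end ScoreLitAux

/-- in the tautology-reduction profile, for every completion `T` and every
literal `a`, `s(T,a) = (ℓ−1)·ρ + σ_a + (ℓ−1)·(r(d)+r(d+1)) + Σ_{i=1}^{m−1} r(i)`, where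
`σ_a = r(d)` if `T` selects `a` and `σ_a = r(d+1)` otherwise, and
`ρ = (Σ_{i=1}^{m} r(i)) − r(d) − r(d+1)`. -/
theorem score_of_literal (ℓ : ℕ) (hℓ : 1 ≤ ℓ) (r : ℕ → ℕ)
    (hr_mono : ∀ p q, 1 ≤ p → p ≤ q → q ≤ 2 * ℓ + 1 → r q ≤ r p)
    (hr_strict : r (2 * ℓ + 1) < r 1)
    (d : ℕ) (hd1 : 1 ≤ d) (hd2 : d ≤ 2 * ℓ) (hrd : r (d + 1) < r d)
    (oth : Fin ℓ → Fin (2 * ℓ - 1) → Cand ℓ)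
    (hoth_inj : ∀ i, Function.Injective (oth i))
    (hoth_ne : ∀ i q, oth i q ≠ some (i, true) ∧ oth i q ≠ some (i, false))
    (Tv : Fin ℓ → Cand ℓ → ℕ) (hTv : IsProfileCompletion oth d Tv)
    (i : Fin ℓ) (b : Bool) :
    (Selects Tv i b →
      score r oth d Tv (some (i, b)) =
        (ℓ - 1) * ((∑ s ∈ Finset.Icc 1 (2 * ℓ + 1), r s) - r d - r (d + 1)) +
        r d + (ℓ - 1) * (r d + r (d + 1)) + ∑ s ∈ Finset.Icc 1 (2 * ℓ), r s) ∧
    (¬ Selects Tv i b →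
      score r oth d Tv (some (i, b)) =
        (ℓ - 1) * ((∑ s ∈ Finset.Icc 1 (2 * ℓ + 1), r s) - r d - r (d + 1)) +
        r (d + 1) + (ℓ - 1) * (r d + r (d + 1)) + ∑ s ∈ Finset.Icc 1 (2 * ℓ), r s) := by
  have key : ∀ σ : ℕ, Tv i (some (i, b)) = σ →
      score r oth d Tv (some (i, b)) =
        (ℓ - 1) * ((∑ s ∈ Finset.Icc 1 (2 * ℓ + 1), r s) - r d - r (d + 1)) +
        r σ + (ℓ - 1) * (r d + r (d + 1)) + ∑ s ∈ Finset.Icc 1 (2 * ℓ), r s := by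
    intro σ hσ
    rw [score, ScoreLitAux.sum_u r hℓ i b]
    have hA : (∑ i' : Fin ℓ, r (Tv i' (some (i, b))))
        = r σ + ∑ i' ∈ Finset.univ.erase i, r (Tv i' (some (i, b))) := by
      rw [← Finset.add_sum_erase _ _ (Finset.mem_univ i), hσ]
    have hB : (∑ i' : Fin ℓ, ∑ j ∈ Finset.Icc 1 (2 * ℓ - 2),
          r (vijPos oth d i' j (some (i, b))))
        = (ℓ - 1) * (r d + r (d + 1)) +
          ∑ i' ∈ Finset.univ.erase i, ∑ j ∈ Finset.Icc 1 (2 * ℓ - 2),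
            r (vijPos oth d i' j (some (i, b))) := by
      rw [← Finset.add_sum_erase _ _ (Finset.mem_univ i),
        ScoreLitAux.sum_vij_pair r oth d hℓ hd1 i b]
    have hterm : ∀ i' ∈ Finset.univ.erase i,
        r (Tv i' (some (i, b))) + ∑ j ∈ Finset.Icc 1 (2 * ℓ - 2),
            r (vijPos oth d i' j (some (i, b)))
          = (∑ s ∈ Finset.Icc 1 (2 * ℓ + 1), r s) - r d - r (d + 1) := by
      intro i' hi'
      have hne : i' ≠ i := Finset.ne_of_mem_erase hi'
      have h1 : (some (i, b) : Cand ℓ) ≠ some (i', true) := by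
        intro heq
        rw [Option.some_inj, Prod.mk.injEq] at heq
        exact hne heq.1.symm
      have h2 : (some (i, b) : Cand ℓ) ≠ some (i', false) := by
        intro heq
        rw [Option.some_inj, Prod.mk.injEq] at heq
        exact hne heq.1.symm
      rw [ScoreLitAux.Tv_nonpair oth d Tv hℓ hd1 hd2 hoth_inj hoth_ne hTv i' _ h1 h2]
      exact ScoreLitAux.sum_vi_all r oth d hℓ hd1 hd2 hoth_inj hoth_ne i' _ h1 h2
    have hrest : ∑ i' ∈ Finset.univ.erase i,
        (r (Tv i' (some (i, b))) + ∑ j ∈ Finset.Icc 1 (2 * ℓ - 2),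
            r (vijPos oth d i' j (some (i, b))))
        = (ℓ - 1) * ((∑ s ∈ Finset.Icc 1 (2 * ℓ + 1), r s) - r d - r (d + 1)) := by
      rw [Finset.sum_congr rfl hterm, Finset.sum_const, smul_eq_mul,
        Finset.card_erase_of_mem (Finset.mem_univ i), Finset.card_univ,
        Fintype.card_fin]
    rw [hA, hB]
    have hcomb : (∑ i' ∈ Finset.univ.erase i, r (Tv i' (some (i, b)))) +
        ∑ i' ∈ Finset.univ.erase i, ∑ j ∈ Finset.Icc 1 (2 * ℓ - 2),
          r (vijPos oth d i' j (some (i, b)))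
        = (ℓ - 1) * ((∑ s ∈ Finset.Icc 1 (2 * ℓ + 1), r s) - r d - r (d + 1)) := by
      rw [← Finset.sum_add_distrib]
      exact hrest
    linarith
  constructor
  · intro hsel
    exact key d (ScoreLitAux.Tv_pair_sel oth d Tv hℓ hd1 hd2 hoth_inj hoth_ne hTv i b hsel)
  · intro hsel
    exact key (d + 1)
      (ScoreLitAux.Tv_pair_nosel oth d Tv hℓ hd1 hd2 hoth_inj hoth_ne hTv i b hsel)
end

section
/- In the tautology-reduction profile, for every completion T, the score of the special candidate x₀ is s(T,x₀) = ℓ·ρ + (m−1)·r(m), where ρ = (Σ_{i=1}^{m} r(i)) − r(d) − r(d+1). -/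
/-!
Every voter `u_j` ranks `x₀` last. For a fixed `i`, all comparisons of `x₀` with other
candidates survive in the partial order of `v_i`, so every completion keeps `x₀` where `c^i`
puts it. The voters `v_i^j` rotate the non-literals of `c^i` cyclically through the positions
other than `d, d+1`, so over `v_i, v_i^1, …, v_i^{m−3}` the candidate `x₀` occupies each of
these `m − 2` positions exactly once and collects `ρ`.
-/

open Finset

section PositionOrder

variable {α : Type*} [Fintype α]

theorem card_filter_le_eq_of_injective {f : α → ℕ} (hf : Function.Injective f)
    (hbound : ∀ c, 1 ≤ f c ∧ f c ≤ Fintype.card α) (c : α) :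
    #{c' | f c' ≤ f c} = f c := by
  classical
  have himage : univ.image f = Icc 1 (Fintype.card α) := by
    refine eq_of_subset_of_card_le (fun x hx => ?_) ?_
    · obtain ⟨c', -, rfl⟩ := mem_image.1 hx
      exact mem_Icc.2 (hbound c')
    · rw [card_image_of_injective _ hf, card_univ, Nat.card_Icc, Nat.add_sub_cancel]
  have hfilter : (univ.filter fun c' => f c' ≤ f c).image f = Icc 1 (f c) := by
    ext x
    simp only [mem_image, mem_filter, mem_univ, true_and, mem_Icc]
    constructor
    · rintro ⟨c', hle, rfl⟩
      exact ⟨(hbound c').1, hle⟩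
    · rintro ⟨h1, h2⟩
      obtain ⟨c', -, rfl⟩ := mem_image.1 (himage ▸ mem_Icc.2 ⟨h1, h2.trans (hbound c).2⟩)
      exact ⟨c', h2, rfl⟩
  rw [← card_image_of_injective _ hf, hfilter, Nat.card_Icc, Nat.add_sub_cancel]

theorem eq_of_comparisons_kept {f g : α → ℕ} (hf : Function.Injective f)
    (hfb : ∀ c, 1 ≤ f c ∧ f c ≤ Fintype.card α) (hg : Function.Injective g)
    (hgb : ∀ c, 1 ≤ g c ∧ g c ≤ Fintype.card α) {c : α}
    (hbelow : ∀ a, g a < g c → f a < f c) (habove : ∀ b, g c < g b → f c < f b) :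
    f c = g c := by
  classical
  rw [← card_filter_le_eq_of_injective hf hfb c, ← card_filter_le_eq_of_injective hg hgb c]
  congr 1
  refine filter_congr fun a _ => ?_
  rcases lt_trichotomy (g a) (g c) with h | h | h
  · have := hbelow a h
    constructor <;> intro <;> omega
  · simp [hg h]
  · have := habove a h
    constructor <;> intro <;> omega

end PositionOrder

section CyclicShift

variable {M : Type*} [AddCommMonoid M]

theorem sum_range_mod_sub_eq (g : ℕ → M) {k q : ℕ} (hq : q < k) :
    ∑ j ∈ range k, g ((q + k - j) % k) = ∑ t ∈ range k, g t := by
  have : NeZero k := ⟨by omega⟩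
  rw [← Fin.sum_univ_eq_sum_range g, ← Fin.sum_univ_eq_sum_range (fun j => g ((q + k - j) % k))]
  refine Fintype.sum_equiv (Equiv.subLeft (⟨q, hq⟩ : Fin k)) _ _ fun j => ?_
  rw [Equiv.subLeft_apply, Fin.val_sub]
  congr 2
  dsimp only
  omega

theorem add_sum_Icc_mod_sub_eq (g : ℕ → M) {k q : ℕ} (hq : q < k) :
    g q + ∑ j ∈ Icc 1 (k - 1), g ((q + k - j) % k) = ∑ t ∈ range k, g t := by
  have hrange : range k = insert 0 (Icc 1 (k - 1)) := by
    ext x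
    simp only [mem_range, mem_insert, mem_Icc]
    omega
  rw [← sum_range_mod_sub_eq g hq, hrange, sum_insert (by simp), Nat.sub_zero,
    Nat.add_mod_right, Nat.mod_eq_of_lt hq]

end CyclicShift

section SkipPair

/-- The position of the `t`-th (counting from `0`) of the candidates `c₁, c₂, …` in an order
that reserves the positions `d` and `d + 1` for two other candidates. -/
def skipPair (d t : ℕ) : ℕ := if t + 1 < d then t + 1 else t + 3

variable {d : ℕ}

theorem skipPair_injective : Function.Injective (skipPair d) := by
  intro a b h
  unfold skipPair at h
  split_ifs at h <;> omega

theorem skipPair_ne (t : ℕ) : skipPair d t ≠ d ∧ skipPair d t ≠ d + 1 := by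
  unfold skipPair
  split_ifs <;> omega

theorem image_skipPair_range {n : ℕ} (hd1 : 1 ≤ d) (hd2 : d ≤ n + 1) :
    (range n).image (skipPair d) = Icc 1 (n + 2) \ {d, d + 1} := by
  ext x
  simp only [mem_image, mem_range, mem_sdiff, mem_Icc, mem_insert, mem_singleton, skipPair]
  constructor
  · rintro ⟨t, ht, rfl⟩
    split_ifs <;> omega
  · rintro ⟨⟨h1, h2⟩, hx⟩
    by_cases hxd : x < d
    · exact ⟨x - 1, by omega, by rw [if_pos (by omega)]; omega⟩
    · exact ⟨x - 3, by omega, by rw [if_neg (by omega)]; omega⟩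

theorem sum_skipPair_add {M : Type*} [AddCommMonoid M] (f : ℕ → M) {n : ℕ} (hd1 : 1 ≤ d)
    (hd2 : d ≤ n + 1) :
    ∑ t ∈ range n, f (skipPair d t) + (f d + f (d + 1)) = ∑ s ∈ Icc 1 (n + 2), f s := by
  rw [← sum_image skipPair_injective.injOn, image_skipPair_range hd1 hd2,
    ← sum_pair (by omega : d ≠ d + 1)]
  refine sum_sdiff fun x hx => ?_
  simp only [mem_insert, mem_singleton] at hx
  simp only [mem_Icc]
  omega

end SkipPair

section Profile

variable {ℓ : ℕ} {oth : Fin ℓ → Fin (2 * ℓ - 1) → Cand ℓ} {d : ℕ} {i : Fin ℓ}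

theorem card_cand (ℓ : ℕ) : Fintype.card (Cand ℓ) = 2 * ℓ + 1 := by
  simp only [Fintype.card_option, Fintype.card_prod, Fintype.card_fin, Fintype.card_bool]
  ring

theorem exists_oth_eq (hinj : Function.Injective (oth i))
    (hne : ∀ q, oth i q ≠ some (i, true) ∧ oth i q ≠ some (i, false)) {c : Cand ℓ}
    (h1 : c ≠ some (i, true)) (h2 : c ≠ some (i, false)) : ∃ q, oth i q = c := by
  classical
  have hsub : univ.image (oth i) ⊆ univ \ {some (i, true), some (i, false)} := by
    intro x hx
    obtain ⟨q, -, rfl⟩ := mem_image.1 hx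
    simpa only [mem_sdiff, mem_univ, true_and, mem_insert, mem_singleton, not_or] using hne q
  have hcard : #(univ \ {some (i, true), some (i, false)} : Finset (Cand ℓ)) ≤
      #(univ.image (oth i)) := by
    rw [card_sdiff_of_subset (subset_univ _), card_image_of_injective _ hinj, card_univ,
      card_univ, card_cand, Fintype.card_fin, card_pair (by simp)]
    omega
  obtain ⟨q, -, hq⟩ := mem_image.1 (eq_of_subset_of_card_le hsub hcard ▸ (by simp [h1, h2] :
    c ∈ (univ \ {some (i, true), some (i, false)} : Finset (Cand ℓ))))
  exact ⟨q, hq⟩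

theorem othIdx_spec {c : Cand ℓ} (h : ∃ q, oth i q = c) :
    ∃ q : Fin (2 * ℓ - 1), (q : ℕ) = othIdx oth i c ∧ oth i q = c :=
  ⟨h.choose, by rw [othIdx, dif_pos h], h.choose_spec⟩

theorem othIdx_lt (hinj : Function.Injective (oth i))
    (hne : ∀ q, oth i q ≠ some (i, true) ∧ oth i q ≠ some (i, false)) {c : Cand ℓ}
    (h1 : c ≠ some (i, true)) (h2 : c ≠ some (i, false)) : othIdx oth i c < 2 * ℓ - 1 := by
  obtain ⟨q, hq, -⟩ := othIdx_spec (exists_oth_eq hinj hne h1 h2)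
  exact hq ▸ q.isLt

theorem eq_of_othIdx_eq (hinj : Function.Injective (oth i))
    (hne : ∀ q, oth i q ≠ some (i, true) ∧ oth i q ≠ some (i, false)) {a b : Cand ℓ}
    (ha1 : a ≠ some (i, true)) (ha2 : a ≠ some (i, false))
    (hb1 : b ≠ some (i, true)) (hb2 : b ≠ some (i, false))
    (h : othIdx oth i a = othIdx oth i b) : a = b := by
  obtain ⟨qa, hqa, rfl⟩ := othIdx_spec (exists_oth_eq hinj hne ha1 ha2)
  obtain ⟨qb, hqb, rfl⟩ := othIdx_spec (exists_oth_eq hinj hne hb1 hb2)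
  rw [Fin.ext (hqa.trans (h.trans hqb.symm))]

theorem viBasePos_of_ne {c : Cand ℓ} (h1 : c ≠ some (i, true)) (h2 : c ≠ some (i, false)) :
    viBasePos oth d i c = skipPair d (othIdx oth i c) := by
  rw [viBasePos, if_neg h1, if_neg h2, skipPair]

theorem viBasePos_eq_iff (c : Cand ℓ) :
    (viBasePos oth d i c = d ↔ c = some (i, true)) ∧
      (viBasePos oth d i c = d + 1 ↔ c = some (i, false)) := by
  by_cases h1 : c = some (i, true)
  · simp [viBasePos, h1]
  by_cases h2 : c = some (i, false)
  · simp [viBasePos, h2]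
  rw [viBasePos_of_ne h1 h2]
  simp only [h1, h2, skipPair_ne, and_self]

theorem viBasePos_injective (hinj : Function.Injective (oth i))
    (hne : ∀ q, oth i q ≠ some (i, true) ∧ oth i q ≠ some (i, false)) :
    Function.Injective (viBasePos oth d i) := by
  intro a b h
  by_cases ha1 : a = some (i, true)
  · exact ha1.trans ((viBasePos_eq_iff b).1.1 (h ▸ (viBasePos_eq_iff a).1.2 ha1)).symm
  by_cases ha2 : a = some (i, false)
  · exact ha2.trans ((viBasePos_eq_iff b).2.1 (h ▸ (viBasePos_eq_iff a).2.2 ha2)).symm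
  have hb1 : b ≠ some (i, true) := fun hb =>
    ha1 ((viBasePos_eq_iff a).1.1 (h.symm ▸ (viBasePos_eq_iff b).1.2 hb))
  have hb2 : b ≠ some (i, false) := fun hb =>
    ha2 ((viBasePos_eq_iff a).2.1 (h.symm ▸ (viBasePos_eq_iff b).2.2 hb))
  rw [viBasePos_of_ne ha1 ha2, viBasePos_of_ne hb1 hb2] at h
  exact eq_of_othIdx_eq hinj hne ha1 ha2 hb1 hb2 (skipPair_injective h)

theorem viBasePos_mem_Icc (hinj : Function.Injective (oth i))
    (hne : ∀ q, oth i q ≠ some (i, true) ∧ oth i q ≠ some (i, false))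
    (hd1 : 1 ≤ d) (hd2 : d ≤ 2 * ℓ) (c : Cand ℓ) :
    1 ≤ viBasePos oth d i c ∧ viBasePos oth d i c ≤ 2 * ℓ + 1 := by
  by_cases h1 : c = some (i, true)
  · rw [(viBasePos_eq_iff c).1.2 h1]
    omega
  by_cases h2 : c = some (i, false)
  · rw [(viBasePos_eq_iff c).2.2 h2]
    omega
  have := othIdx_lt hinj hne h1 h2
  rw [viBasePos_of_ne h1 h2, skipPair]
  split_ifs <;> omega

theorem completion_pos_none {Tv : Fin ℓ → Cand ℓ → ℕ} (hTv : IsProfileCompletion oth d Tv)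
    (hinj : Function.Injective (oth i))
    (hne : ∀ q, oth i q ≠ some (i, true) ∧ oth i q ≠ some (i, false))
    (hd1 : 1 ≤ d) (hd2 : d ≤ 2 * ℓ) :
    Tv i none = viBasePos oth d i none := by
  obtain ⟨⟨hTinj, hTb⟩, hext⟩ := hTv i
  exact eq_of_comparisons_kept hTinj (card_cand ℓ ▸ hTb) (viBasePos_injective hinj hne)
    (card_cand ℓ ▸ viBasePos_mem_Icc hinj hne hd1 hd2)
    (fun a h => hext a none h (by simp)) (fun b h => hext none b h (by simp))

theorem vijPos_none (j : ℕ) :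
    vijPos oth d i j none =
      skipPair d ((othIdx oth i none + (2 * ℓ - 1) - j) % (2 * ℓ - 1)) := by
  simp only [vijPos, reduceCtorEq, if_false, skipPair]

theorem sum_vi_voters_none (r : ℕ → ℕ) {Tv : Fin ℓ → Cand ℓ → ℕ}
    (hTv : IsProfileCompletion oth d Tv) (hinj : Function.Injective (oth i))
    (hne : ∀ q, oth i q ≠ some (i, true) ∧ oth i q ≠ some (i, false))
    (hd1 : 1 ≤ d) (hd2 : d ≤ 2 * ℓ) :
    r (Tv i none) + ∑ j ∈ Icc 1 (2 * ℓ - 2), r (vijPos oth d i j none) + (r d + r (d + 1)) =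
      ∑ s ∈ Icc 1 (2 * ℓ + 1), r s := by
  have hq := othIdx_lt hinj hne (c := none) (by simp) (by simp)
  simp only [completion_pos_none hTv hinj hne hd1 hd2,
    viBasePos_of_ne (c := none) (by simp) (by simp), vijPos_none]
  rw [show 2 * ℓ - 2 = 2 * ℓ - 1 - 1 by omega,
    add_sum_Icc_mod_sub_eq (fun t => r (skipPair d t)) hq, show 2 * ℓ + 1 = 2 * ℓ - 1 + 2 by omega]
  exact sum_skipPair_add r hd1 (by omega)

theorem sum_uPos_none (r : ℕ → ℕ) :
    ∑ j ∈ Icc 1 (2 * ℓ), r (uPos ℓ j none) = 2 * ℓ * r (2 * ℓ + 1) := by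
  simp [uPos]

end Profile

theorem score_of_special_candidate_general (ℓ : ℕ) (r : ℕ → ℕ)
    (d : ℕ) (hd1 : 1 ≤ d) (hd2 : d ≤ 2 * ℓ)
    (oth : Fin ℓ → Fin (2 * ℓ - 1) → Cand ℓ)
    (hoth_inj : ∀ i, Function.Injective (oth i))
    (hoth_ne : ∀ i q, oth i q ≠ some (i, true) ∧ oth i q ≠ some (i, false))
    (Tv : Fin ℓ → Cand ℓ → ℕ) (hTv : IsProfileCompletion oth d Tv) :
    score r oth d Tv none =
      ℓ * ((∑ s ∈ Finset.Icc 1 (2 * ℓ + 1), r s) - r d - r (d + 1)) +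
      (2 * ℓ) * r (2 * ℓ + 1) := by
  have hvi : ∀ i, r (Tv i none) + ∑ j ∈ Icc 1 (2 * ℓ - 2), r (vijPos oth d i j none) =
      (∑ s ∈ Icc 1 (2 * ℓ + 1), r s) - r d - r (d + 1) := fun i => by
    have := sum_vi_voters_none r hTv (hoth_inj i) (hoth_ne i) hd1 hd2
    omega
  rw [score, ← sum_add_distrib, sum_congr rfl fun i _ => hvi i, sum_uPos_none, sum_const,
    card_univ, Fintype.card_fin, smul_eq_mul]

/-- in the tautology-reduction profile, for every completion `T`, the score
of the special candidate `x₀` is `s(T,x₀) = ℓ·ρ + (m−1)·r(m)`, where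
`ρ = (Σ_{i=1}^{m} r(i)) − r(d) − r(d+1)`. -/
theorem score_of_special_candidate (ℓ : ℕ) (hℓ : 1 ≤ ℓ) (r : ℕ → ℕ)
    (hr_mono : ∀ p q, 1 ≤ p → p ≤ q → q ≤ 2 * ℓ + 1 → r q ≤ r p)
    (hr_strict : r (2 * ℓ + 1) < r 1)
    (d : ℕ) (hd1 : 1 ≤ d) (hd2 : d ≤ 2 * ℓ) (hrd : r (d + 1) < r d)
    (oth : Fin ℓ → Fin (2 * ℓ - 1) → Cand ℓ)
    (hoth_inj : ∀ i, Function.Injective (oth i))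
    (hoth_ne : ∀ i q, oth i q ≠ some (i, true) ∧ oth i q ≠ some (i, false))
    (Tv : Fin ℓ → Cand ℓ → ℕ) (hTv : IsProfileCompletion oth d Tv) :
    score r oth d Tv none =
      ℓ * ((∑ s ∈ Finset.Icc 1 (2 * ℓ + 1), r s) - r d - r (d + 1)) +
      (2 * ℓ) * r (2 * ℓ + 1) :=
  score_of_special_candidate_general ℓ r d hd1 hd2 oth hoth_inj hoth_ne Tv hTv
end
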